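/- arXiv:1105.3326 — 2 statements merged into one kernel-verified Lean document; each statement's English description precedes it below -/
import Mathlib

section
/- (Minimal sampling rate bound, Proposition 1) Let h : A → H satisfy α_h‖θ₁−θ₂‖ ≤ ‖h(θ₁)−h(θ₂)‖ with α_h > 0, and let S : H → ℝ^N satisfy α_s‖x₁−x₂‖ ≤ ‖S(x₁)−S(x₂)‖ with α_s > 0, where both h and S are Fréchet differentiable. Then for every θ₁ ∈ A, N ≥ K + dim(ker((DS)(h(θ₁))*)), where (DS)(h(θ₁))* denotes the adjoint of the Fréchet derivative of S at h(θ₁). -/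
/-!
The composite `S ∘ h` satisfies the lower bound `α_s α_h ‖θ - θ₁‖ ≤ ‖S (h θ) - S (h θ₁)‖` on the
neighbourhood `A` of `θ₁`, and such a bound passes to the derivative, so
`DS (h θ₁) ∘ Dh θ₁` is injective. Hence `range DS (h θ₁)` has dimension at least `K`, and its
orthogonal complement `ker (DS (h θ₁))†` has dimension at most `N - K`.
-/

open Filter Topology Module

theorem HasFDerivAt.mul_norm_le_norm_apply {E F : Type*} [NormedAddCommGroup E] [NormedSpace ℝ E]
    [NormedAddCommGroup F] [NormedSpace ℝ F] {f : E → F} {f' : E →L[ℝ] F} {x : E} {s : Set E}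
    {c : ℝ} (hf : HasFDerivAt f f' x) (hs : s ∈ 𝓝 x)
    (hbound : ∀ y ∈ s, c * ‖y - x‖ ≤ ‖f y - f x‖) (v : E) : c * ‖v‖ ≤ ‖f' v‖ := by
  have hnear : ∀ᶠ t : ℝ in atTop, x + t⁻¹ • v ∈ s := by
    have : Tendsto (fun t : ℝ => x + t⁻¹ • v) atTop (𝓝 x) := by
      simpa using tendsto_const_nhds.add ((tendsto_inv_atTop_zero (𝕜 := ℝ)).smul_const v)
    exact this hs
  refine ge_of_tendsto (hf.lim_real v).norm ?_
  filter_upwards [hnear, eventually_gt_atTop 0] with t ht htpos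
  calc c * ‖v‖ = t * (c * ‖(x + t⁻¹ • v) - x‖) := by
        rw [add_sub_cancel_left, norm_smul, Real.norm_of_nonneg (inv_nonneg.2 htpos.le)]
        field_simp
    _ ≤ t * ‖f (x + t⁻¹ • v) - f x‖ := by gcongr; exact hbound _ ht
    _ = ‖t • (f (x + t⁻¹ • v) - f x)‖ := by rw [norm_smul, Real.norm_of_nonneg htpos.le]

theorem injective_of_mul_norm_le {E F 𝓕 : Type*} [NormedAddCommGroup E]
    [SeminormedAddCommGroup F] [FunLike 𝓕 E F] [AddMonoidHomClass 𝓕 E F] {f : 𝓕} {c : ℝ}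
    (hc : 0 < c) (hbound : ∀ v, c * ‖v‖ ≤ ‖f v‖) : Function.Injective f := by
  refine (injective_iff_map_eq_zero f).2 fun v hv => norm_le_zero_iff.1 ?_
  have := hbound v
  rw [hv, norm_zero] at this
  exact nonpos_of_mul_nonpos_right this hc

theorem ContinuousLinearMap.finrank_add_finrank_ker_adjoint_le {𝕜 E F G : Type*} [RCLike 𝕜]
    [NormedAddCommGroup E] [InnerProductSpace 𝕜 E] [CompleteSpace E]
    [NormedAddCommGroup F] [InnerProductSpace 𝕜 F] [CompleteSpace F] [FiniteDimensional 𝕜 F]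
    [AddCommGroup G] [Module 𝕜 G] (T : E →L[𝕜] F) (L : G →ₗ[𝕜] E)
    (hinj : Function.Injective (T ∘ L)) :
    finrank 𝕜 G + finrank 𝕜 (LinearMap.ker (adjoint T).toLinearMap) ≤ finrank 𝕜 F := by
  have hG : finrank 𝕜 G ≤ finrank 𝕜 T.range := calc
    finrank 𝕜 G = finrank 𝕜 (T.toLinearMap ∘ₗ L).range :=
      (LinearMap.finrank_range_of_inj hinj).symm
    _ ≤ finrank 𝕜 T.range := Submodule.finrank_mono (LinearMap.range_comp_le_range _ _)
  have hsplit := T.range.finrank_add_finrank_orthogonal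
  rw [T.orthogonal_range] at hsplit
  omega

/-- Proposition 1: minimal sampling rate. -/
theorem stmt_4 {K N : ℕ} {H : Type*} [NormedAddCommGroup H] [InnerProductSpace ℝ H]
    [CompleteSpace H]
    (A : Set (EuclideanSpace ℝ (Fin K))) (hA : IsOpen A)
    (h : EuclideanSpace ℝ (Fin K) → H)
    (S : H → EuclideanSpace ℝ (Fin N))
    (Dh : EuclideanSpace ℝ (Fin K) → (EuclideanSpace ℝ (Fin K) →L[ℝ] H))
    (DS : H → (H →L[ℝ] EuclideanSpace ℝ (Fin N)))
    (hDh : ∀ θ ∈ A, HasFDerivAt h (Dh θ) θ)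
    (hDS : ∀ x, HasFDerivAt S (DS x) x)
    (αh αs : ℝ) (hαh : 0 < αh) (hαs : 0 < αs)
    (hhstab : ∀ θ₁ ∈ A, ∀ θ₂ ∈ A, αh * ‖θ₁ - θ₂‖ ≤ ‖h θ₁ - h θ₂‖)
    (hSstab : ∀ x₁ ∈ h '' A, ∀ x₂ ∈ h '' A, αs * ‖x₁ - x₂‖ ≤ ‖S x₁ - S x₂‖)
    (θ₁ : EuclideanSpace ℝ (Fin K)) (hθ₁ : θ₁ ∈ A) :
    N ≥ K + Module.finrank ℝ
      (LinearMap.ker (ContinuousLinearMap.adjoint (DS (h θ₁))).toLinearMap) := by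
  have hstab : ∀ θ ∈ A, αs * αh * ‖θ - θ₁‖ ≤ ‖S (h θ) - S (h θ₁)‖ := fun θ hθ => calc
    αs * αh * ‖θ - θ₁‖ = αs * (αh * ‖θ - θ₁‖) := mul_assoc _ _ _
    _ ≤ αs * ‖h θ - h θ₁‖ := by gcongr; exact hhstab θ hθ θ₁ hθ₁
    _ ≤ ‖S (h θ) - S (h θ₁)‖ :=
      hSstab _ (Set.mem_image_of_mem h hθ) _ (Set.mem_image_of_mem h hθ₁)
  have hderiv : HasFDerivAt (S ∘ h) (DS (h θ₁) ∘L Dh θ₁) θ₁ := (hDS (h θ₁)).comp θ₁ (hDh θ₁ hθ₁)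
  have hinj : Function.Injective (DS (h θ₁) ∘L Dh θ₁) :=
    injective_of_mul_norm_le (mul_pos hαs hαh)
      (hderiv.mul_norm_le_norm_apply (hA.mem_nhds hθ₁) hstab)
  simpa using (DS (h θ₁)).finrank_add_finrank_ker_adjoint_le (Dh θ₁).toLinearMap hinj
end

section
/- (CPM reparametrization) Let g : ℝ → ℝ be integrable with support in [0, LT], and for a sequence (a_m) define ã_m = Σ_{n ≤ m} a_n and g̃(t) = 2πh∫_{−∞}^t (g(τ) − g(τ−T)) dτ. Then for every t, 2πh ∫_{−∞}^t Σ_m a_m g(τ − mT) dτ = Σ_m ã_m g̃(t − mT) (for finitely supported sequences (a_m)), and g̃ is supported in [0, (L+1)T]. -/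
/-!
Put `Φ m = ∫_{τ ≤ t - mT} g τ`. Shifting each integral turns the left-hand side into
`2πh Σ a_m Φ_m`, while `g̃ (t - mT) = 2πh (Φ_m - Φ_{m+1})`. Summation by parts against the
partial sums `ã_m` gives back `Σ a_m Φ_m`, and all sums are finite because `Φ_m = 0` as soon
as `mT > t`. The pulse `g̃ s` is a difference of two values of the cumulative integral of `g`,
both `0` when `s < 0` and both `∫ g` when `s > (L + 1) T`.
-/

open MeasureTheory Set

section AbelSummation

variable {R : Type*}

theorem hasSum_ite_le_sub_succ [AddCommGroup R] [TopologicalSpace R] [ContinuousAdd R]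
    {Φ : ℤ → R} {N : ℤ} (hΦ : ∀ m ≥ N, Φ m = 0) (n : ℤ) :
    HasSum (fun m => if n ≤ m then Φ m - Φ (m + 1) else 0) (Φ n) := by
  have base : ∀ n ≥ N, HasSum (fun m => if n ≤ m then Φ m - Φ (m + 1) else 0) (Φ n) := by
    intro n hn
    convert hasSum_zero using 1
    · ext m
      split_ifs with hm
      · rw [hΦ m (by omega), hΦ (m + 1) (by omega), sub_self]
      · rfl
    · exact hΦ n hn
  rcases le_or_gt N n with hn | hn
  · exact base n hn
  have hnN := hn.le
  clear hn
  induction n, hnN using Int.leInductionDown with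
  | base => exact base N le_rfl
  | pred k _ ih =>
    convert ih.add (hasSum_ite_eq (k - 1) (Φ (k - 1) - Φ k)) using 1
    · ext m
      rcases lt_trichotomy m (k - 1) with hm | rfl | hm
      · simp [show ¬k - 1 ≤ m by omega, show ¬k ≤ m by omega, hm.ne]
      · simp
      · simp [show k - 1 ≤ m by omega, show k ≤ m by omega, hm.ne']
    · abel

theorem hasSum_partialSum_mul_sub_succ [Ring R] [TopologicalSpace R] [IsTopologicalRing R]
    (a : ℤ →₀ R) {Φ : ℤ → R} {N : ℤ} (hΦ : ∀ m ≥ N, Φ m = 0) :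
    HasSum (fun m => (∑ n ∈ a.support.filter (· ≤ m), a n) * (Φ m - Φ (m + 1)))
      (∑ n ∈ a.support, a n * Φ n) := by
  have hsplit : ∀ m, (∑ n ∈ a.support.filter (· ≤ m), a n) * (Φ m - Φ (m + 1)) =
      ∑ n ∈ a.support, a n * (if n ≤ m then Φ m - Φ (m + 1) else 0) := by
    intro m
    simp only [Finset.sum_filter, Finset.sum_mul, ite_mul, zero_mul, mul_ite, mul_zero]
  simp_rw [hsplit]
  exact hasSum_sum fun n _ => (hasSum_ite_le_sub_succ hΦ n).mul_left (a n)

end AbelSummation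

section CumulativeIntegral

variable {E : Type*} [NormedAddCommGroup E] [NormedSpace ℝ E]

theorem setIntegral_Iic_comp_sub_right (g : ℝ → E) (c s : ℝ) :
    ∫ τ in Iic s, g (τ - c) = ∫ τ in Iic (s - c), g τ := by
  rw [← (measurePreserving_sub_right volume c).setIntegral_preimage_emb
    (measurableEmbedding_subRight c) g (Iic (s - c)), preimage_sub_const_Iic, sub_add_cancel]

variable {g : ℝ → E}

theorem setIntegral_Iic_sub_comp_sub_right (hg : Integrable g) (c s : ℝ) :
    ∫ τ in Iic s, (g τ - g (τ - c)) = (∫ τ in Iic s, g τ) - ∫ τ in Iic (s - c), g τ := by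
  rw [integral_sub hg.integrableOn (hg.comp_sub_right c).integrableOn,
    setIntegral_Iic_comp_sub_right]

theorem setIntegral_Iic_eq_zero_of_support_subset_Ici (hsupp : Function.support g ⊆ Ici 0)
    {s : ℝ} (hs : s < 0) : ∫ τ in Iic s, g τ = 0 :=
  setIntegral_eq_zero_of_forall_eq_zero fun _ hτ =>
    Function.notMem_support.1 fun hgτ => (lt_of_le_of_lt hτ hs).not_ge (hsupp hgτ)

theorem setIntegral_Iic_eq_integral_of_support_subset_Iic {b : ℝ}
    (hsupp : Function.support g ⊆ Iic b) {s : ℝ} (hs : b ≤ s) :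
    ∫ τ in Iic s, g τ = ∫ τ, g τ :=
  setIntegral_eq_integral_of_forall_compl_eq_zero fun _ hτ =>
    Function.notMem_support.1 fun hgτ => hτ ((hsupp hgτ).trans hs)

theorem support_setIntegral_Iic_sub_comp_sub_subset (hg : Integrable g) {b c : ℝ} (hc : 0 ≤ c)
    (hsupp : Function.support g ⊆ Icc 0 b) :
    Function.support (fun s => ∫ τ in Iic s, (g τ - g (τ - c))) ⊆ Icc 0 (b + c) := by
  intro s hs
  by_contra hsI
  rw [mem_Icc, not_and_or, not_le, not_le] at hsI
  apply hs
  dsimp only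
  rw [setIntegral_Iic_sub_comp_sub_right hg]
  rcases hsI with hneg | hbig
  · rw [setIntegral_Iic_eq_zero_of_support_subset_Ici (hsupp.trans Icc_subset_Ici_self) hneg,
      setIntegral_Iic_eq_zero_of_support_subset_Ici (hsupp.trans Icc_subset_Ici_self)
        (by linarith), sub_zero]
  · rw [setIntegral_Iic_eq_integral_of_support_subset_Iic (hsupp.trans Icc_subset_Iic_self)
        (by linarith),
      setIntegral_Iic_eq_integral_of_support_subset_Iic (hsupp.trans Icc_subset_Iic_self)
        (by linarith), sub_self]

end CumulativeIntegral

theorem hasSum_partialSum_mul_setIntegral_Iic_sub_comp_sub {g : ℝ → ℝ} (hg : Integrable g)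
    (hsupp : Function.support g ⊆ Ici 0) {T : ℝ} (hT : 0 < T) (a : ℤ →₀ ℝ) (t : ℝ) :
    HasSum (fun m : ℤ => (∑ n ∈ a.support.filter (· ≤ m), a n) *
        ∫ τ in Iic (t - m * T), (g τ - g (τ - T)))
      (∫ τ in Iic t, ∑ m ∈ a.support, a m * g (τ - m * T)) := by
  set Φ : ℤ → ℝ := fun m => ∫ τ in Iic (t - m * T), g τ
  have hΦ : ∀ m ≥ ⌊t / T⌋ + 1, Φ m = 0 := by
    intro m hm
    have htm : t < m * T := (div_lt_iff₀ hT).1 (Int.floor_lt.1 (by omega))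
    exact setIntegral_Iic_eq_zero_of_support_subset_Ici hsupp (by linarith)
  have hdiff : ∀ m : ℤ, ∫ τ in Iic (t - m * T), (g τ - g (τ - T)) = Φ m - Φ (m + 1) := by
    intro m
    rw [setIntegral_Iic_sub_comp_sub_right hg]
    simp only [Φ, Int.cast_add, Int.cast_one, add_mul, one_mul, sub_sub]
  have hlhs : ∫ τ in Iic t, ∑ m ∈ a.support, a m * g (τ - m * T) = ∑ m ∈ a.support, a m * Φ m := by
    rw [integral_finsetSum _ fun m _ => ((hg.comp_sub_right _).integrableOn.const_mul (a m))]
    simp only [integral_const_mul, setIntegral_Iic_comp_sub_right, Φ]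
  simp only [hdiff, hlhs]
  exact hasSum_partialSum_mul_sub_succ a hΦ

theorem stmt_18_general (T : ℝ) (hT : 0 < T) (L : ℕ) (h : ℝ)
    (g : ℝ → ℝ) (hg : Integrable g (volume : Measure ℝ))
    (hsupp : Function.support g ⊆ Set.Icc 0 ((L : ℝ) * T))
    (a : ℤ →₀ ℝ)
    (atilde : ℤ → ℝ)
    (hatilde : ∀ m : ℤ, atilde m = ∑ n ∈ a.support.filter (· ≤ m), a n)
    (gtilde : ℝ → ℝ)
    (hgtilde : ∀ t : ℝ, gtilde t = 2 * Real.pi * h * ∫ τ in Set.Iic t, (g τ - g (τ - T))) :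
    (∀ t : ℝ,
      2 * Real.pi * h * (∫ τ in Set.Iic t, ∑ m ∈ a.support, a m * g (τ - (m : ℝ) * T)) =
        ∑' m : ℤ, atilde m * gtilde (t - (m : ℝ) * T)) ∧
    Function.support gtilde ⊆ Set.Icc 0 (((L : ℝ) + 1) * T) := by
  refine ⟨fun t => ?_, ?_⟩
  · rw [← ((hasSum_partialSum_mul_setIntegral_Iic_sub_comp_sub hg
      (hsupp.trans Icc_subset_Ici_self) hT a t).mul_left (2 * Real.pi * h)).tsum_eq]
    simp only [hatilde, hgtilde]
    exact tsum_congr fun m => by ring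
  · rw [show gtilde = _ from funext hgtilde, add_one_mul]
    exact (Function.support_mul_subset_right _ _).trans
      (support_setIntegral_Iic_sub_comp_sub_subset hg hT.le hsupp)

/-- CPM reparametrization: the integrated modulation can be rewritten as a
shift-invariant expansion with the cumulative symbols `ã_m = Σ_{n ≤ m} a_n` and
the pulse `g̃(t) = 2πh ∫_{−∞}^t (g(τ) − g(τ−T)) dτ`, which is supported in
`[0, (L+1)T]`. -/
theorem stmt_18 (T : ℝ) (hT : 0 < T) (L : ℕ) (hL : 0 < L) (h : ℝ)
    (g : ℝ → ℝ) (hg : Integrable g (volume : Measure ℝ))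
    (hsupp : Function.support g ⊆ Set.Icc 0 ((L : ℝ) * T))
    (hint : ∫ τ, g τ = 1 / 2)
    (a : ℤ →₀ ℝ)
    (atilde : ℤ → ℝ)
    (hatilde : ∀ m : ℤ, atilde m = ∑ n ∈ a.support.filter (· ≤ m), a n)
    (gtilde : ℝ → ℝ)
    (hgtilde : ∀ t : ℝ, gtilde t = 2 * Real.pi * h * ∫ τ in Set.Iic t, (g τ - g (τ - T))) :
    (∀ t : ℝ,
      2 * Real.pi * h * (∫ τ in Set.Iic t, ∑ m ∈ a.support, a m * g (τ - (m : ℝ) * T)) =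
        ∑' m : ℤ, atilde m * gtilde (t - (m : ℝ) * T)) ∧
    Function.support gtilde ⊆ Set.Icc 0 (((L : ℝ) + 1) * T) :=
  stmt_18_general T hT L h g hg hsupp a atilde hatilde gtilde hgtilde
end
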